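/- Let d ≥ 3. For any v₀ ∈ ℝ^d and any δ > 0, the support of Q₊(1_{B(v₀,δ)}, 1_{B(v₀,δ)}) equals the closed ball B(v₀, √2 δ). More precisely, for any 0 < χ < 1 there exists a universal constant κ₀ > 0 (independent of v₀, δ, χ) such that Q₊(1_{B(v₀,δ)}, 1_{B(v₀,δ)})(ξ) ≥ κ₀ δ^{d+1} χ^{d+1} 1_{B(v₀, (1−χ)√2 δ)}(ξ) for all δ > 0 and all ξ ∈ ℝ^d. -/

import Mathlib

noncomputable section

open MeasureTheory Real Metric Filter Set ENNReal RealInnerProductSpace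

namespace BallisticAnnihilation


/-- Velocity space: `d`-dimensional Euclidean space. -/
abbrev V (d : ℕ) := EuclideanSpace ℝ (Fin d)

/-- Japanese bracket `⟨ξ⟩ = (1+|ξ|²)^{1/2}`. -/
def jap {d : ℕ} (ξ : V d) : ℝ := Real.sqrt (1 + ‖ξ‖ ^ 2)

/-- The normalized uniform (probability) measure on the unit sphere of `ℝ^d`, realized as
the image of the normalized Lebesgue measure on the unit ball under `x ↦ x/‖x‖`. -/
def sphMeas (d : ℕ) : Measure (V d) :=
  Measure.map (fun x : V d => ‖x‖⁻¹ • x)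
    ((volume (ball (0 : V d) 1))⁻¹ • volume.restrict (ball (0 : V d) 1))

/-- Post-collisional velocity `v' = (v+w)/2 + (|v-w|/2) σ`. -/
def vP {d : ℕ} (v w σ : V d) : V d := (2:ℝ)⁻¹ • (v + w) + (‖v - w‖ / 2) • σ

/-- Post-collisional velocity `v'_* = (v+w)/2 - (|v-w|/2) σ`. -/
def vPs {d : ℕ} (v w σ : V d) : V d := (2:ℝ)⁻¹ • (v + w) - (‖v - w‖ / 2) • σ

/-- The hard-spheres Boltzmann collision operator `Q(g,f)`. -/
def Qcol {d : ℕ} (g f : V d → ℝ) (v : V d) : ℝ :=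
  ∫ w, (∫ σ, ‖v - w‖ * (g (vP v w σ) * f (vPs v w σ) - g v * f w) ∂(sphMeas d)) ∂volume

/-- The gain part `Q₊(g,f)` of the collision operator. -/
def Qplus {d : ℕ} (g f : V d → ℝ) (v : V d) : ℝ :=
  ∫ w, (∫ σ, ‖v - w‖ * (g (vP v w σ) * f (vPs v w σ)) ∂(sphMeas d)) ∂volume

/-- The loss part `Q₋(g,f)` of the collision operator. -/
def Qminus {d : ℕ} (g f : V d → ℝ) (v : V d) : ℝ :=
  g v * ∫ w, f w * ‖v - w‖

/-- The Maxwellian `M(ξ) = π^{-d/2} e^{-|ξ|²}`. -/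
def Maxw (d : ℕ) (ξ : V d) : ℝ := Real.pi ^ (-(d:ℝ)/2) * Real.exp (-‖ξ‖ ^ 2)

/-- Mass `∫ g`. -/
def massOf {d : ℕ} (g : V d → ℝ) : ℝ := ∫ v, g v

/-- Bulk velocity `u = (∫ g)⁻¹ ∫ g v dv`. -/
def velOf {d : ℕ} (g : V d → ℝ) : V d := (massOf g)⁻¹ • ∫ v, g v • v

/-- Temperature `T = (d ∫ g)⁻¹ ∫ g |v-u|² dv`. -/
def tempOf (d : ℕ) (g : V d → ℝ) : ℝ :=
  ((d : ℝ) * massOf g)⁻¹ * ∫ v, g v * ‖v - velOf g‖ ^ 2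

def nf {d : ℕ} (f : ℝ → V d → ℝ) (t : ℝ) : ℝ := massOf (f t)

def uf {d : ℕ} (f : ℝ → V d → ℝ) (t : ℝ) : V d := velOf (f t)

def Tf (d : ℕ) (f : ℝ → V d → ℝ) (t : ℝ) : ℝ := tempOf d (f t)

/-- Centered moment `M_k(t) = ∫ f(t,v) |v - u_f(t)|^k dv`. -/
def Mom {d : ℕ} (f : ℝ → V d → ℝ) (k : ℝ) (t : ℝ) : ℝ := ∫ v, f t v * ‖v - uf f t‖ ^ k

/-- `E_f(t) = M₀(t) M₂(t) = d n_f(t)² T_f(t)`. -/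
def Ef {d : ℕ} (f : ℝ → V d → ℝ) (t : ℝ) : ℝ := Mom f 0 t * Mom f 2 t

/-- `f` is the (unique, nonnegative) solution of the ballistic annihilation equation
`∂ₜ f = (1-α) Q(f,f) - α Q₋(f,f)` with initial datum `f₀`. -/
structure IsSol (d : ℕ) (α : ℝ) (f₀ : V d → ℝ) (f : ℝ → V d → ℝ) : Prop where
  init : ∀ v, f 0 v = f₀ v
  nonneg : ∀ t, 0 ≤ t → ∀ v, 0 ≤ f t v
  mem : ∀ t, 0 ≤ t → Integrable (fun v => f t v * jap v ^ (3:ℝ))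
  eqn : ∀ v t, 0 ≤ t → HasDerivWithinAt (fun s => f s v)
    ((1 - α) * Qcol (f t) (f t) v - α * Qminus (f t) (f t) v) (Set.Ici 0) t

/-- Coefficient `A = -(α/2) ∫ (d+2-2|ξ|²) Q₋(φ,φ)(ξ) dξ`. -/
def Acoef {d : ℕ} (α : ℝ) (φ : V d → ℝ) : ℝ :=
  -(α/2) * ∫ ξ, ((d:ℝ) + 2 - 2 * ‖ξ‖ ^ 2) * Qminus φ φ ξ

/-- Coefficient `B = -(α/2) ∫ (1-(2/d)|ξ|²) Q₋(φ,φ)(ξ) dξ`. -/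
def Bcoef {d : ℕ} (α : ℝ) (φ : V d → ℝ) : ℝ :=
  -(α/2) * ∫ ξ, (1 - (2/(d:ℝ)) * ‖ξ‖ ^ 2) * Qminus φ φ ξ

/-- The product `B·v = -α ∫ ξ Q₋(φ,φ)(ξ) dξ`. -/
def BVcoef {d : ℕ} (α : ℝ) (φ : V d → ℝ) : V d :=
  (-α) • ∫ ξ, Qminus φ φ ξ • ξ

/-- `a = (dB - A)/α`. -/
def acoef {d : ℕ} (α : ℝ) (φ : V d → ℝ) : ℝ := ((d:ℝ) * Bcoef α φ - Acoef α φ) / α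

/-- `b = ((d+2)B - A)/α`. -/
def bcoef {d : ℕ} (α : ℝ) (φ : V d → ℝ) : ℝ := (((d:ℝ) + 2) * Bcoef α φ - Acoef α φ) / α

/-- The time rescaling `τ(t) = √2 ∫₀ᵗ n_f(s) √(T_f(s)) ds`. -/
def tauS (d : ℕ) (f : ℝ → V d → ℝ) (t : ℝ) : ℝ :=
  Real.sqrt 2 * ∫ s in (0:ℝ)..t, nf f s * Real.sqrt (Tf d f s)

/-- The self-similar scaling relation
`f(t,v) = n_f(t) (2T_f(t))^{-d/2} ψ(τ(t), (v-u_f(t))/√(2T_f(t)))`. -/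
def ScalingRel (d : ℕ) (f ψ : ℝ → V d → ℝ) : Prop :=
  ∀ t, 0 ≤ t → ∀ v, f t v = nf f t * (2 * Tf d f t) ^ (-(d:ℝ)/2) *
    ψ (tauS d f t) ((Real.sqrt (2 * Tf d f t))⁻¹ • (v - uf f t))

/-- The rescaled initial datum `ψ₀(ξ) = (2T₀)^{d/2} n₀⁻¹ f₀(√(2T₀) ξ + u₀)`. -/
def rescaledInit (d : ℕ) (f₀ : V d → ℝ) : V d → ℝ := fun ξ =>
  (2 * tempOf d f₀) ^ ((d:ℝ)/2) * (massOf f₀)⁻¹ *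
    f₀ (Real.sqrt (2 * tempOf d f₀) • ξ + velOf f₀)

/-- `ψ` is the (unique, conservative) solution of the rescaled equation
`∂τ ψ + (A_ψ - dB_ψ) ψ + B_ψ div((ξ - v_ψ)ψ) = (1-α) Q(ψ,ψ) - α Q₋(ψ,ψ)`
(written in non-divergence form) with initial datum `ψ₀`. -/
structure IsRescaledSol (d : ℕ) (α : ℝ) (ψ₀ : V d → ℝ) (ψ : ℝ → V d → ℝ) : Prop where
  init : ∀ ξ, ψ 0 ξ = ψ₀ ξ
  nonneg : ∀ t, 0 ≤ t → ∀ ξ, 0 ≤ ψ t ξ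
  mem : ∀ t, 0 ≤ t → Integrable (fun ξ => ψ t ξ * jap ξ ^ (3:ℝ))
  mass : ∀ t, 0 ≤ t → (∫ ξ, ψ t ξ) = 1
  momentum : ∀ t, 0 ≤ t → (∫ ξ, ψ t ξ • ξ) = 0
  energy : ∀ t, 0 ≤ t → (∫ ξ, ψ t ξ * ‖ξ‖ ^ 2) = (d:ℝ)/2
  eqn : ∀ ξ t, 0 ≤ t → HasDerivWithinAt (fun s => ψ s ξ)
    ((1 - α) * Qcol (ψ t) (ψ t) ξ - α * Qminus (ψ t) (ψ t) ξ
      - Acoef α (ψ t) * ψ t ξ - Bcoef α (ψ t) * fderiv ℝ (ψ t) ξ ξ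
      + fderiv ℝ (ψ t) ξ (BVcoef α (ψ t))) (Set.Ici 0) t

/-- `ψa` is the self-similar profile: the smooth radially symmetric steady solution of
`A_α ψ + B_α ξ·∇ψ = (1-α)Q(ψ,ψ) - αQ₋(ψ,ψ)` with unit mass, zero momentum, energy `d/2`. -/
structure IsProfile (d : ℕ) (α : ℝ) (ψa : V d → ℝ) : Prop where
  nonneg : ∀ ξ, 0 ≤ ψa ξ
  smooth : ∀ n : ℕ, ContDiff ℝ n ψa
  radial : ∀ ξ ζ : V d, ‖ξ‖ = ‖ζ‖ → ψa ξ = ψa ζ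
  mem : Integrable (fun ξ => ψa ξ * jap ξ ^ (3:ℝ))
  mass : (∫ ξ, ψa ξ) = 1
  momentum : (∫ ξ, ψa ξ • ξ) = 0
  energy : (∫ ξ, ψa ξ * ‖ξ‖ ^ 2) = (d:ℝ)/2
  steady : ∀ ξ, Acoef α ψa * ψa ξ + Bcoef α ψa * fderiv ℝ ψa ξ ξ
    = (1 - α) * Qcol ψa ψa ξ - α * Qminus ψa ψa ξ

/-- The elastic linearized Boltzmann operator `L₀ h = Q(h,M) + Q(M,h)`. -/
def elasticL {d : ℕ} (h : V d → ℝ) : V d → ℝ := fun ξ =>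
  Qcol h (Maxw d) ξ + Qcol (Maxw d) h ξ

/-- The orthogonal projection (in `L²(M⁻¹)`) onto the kernel
`span{M, ξ₁M, …, ξ_d M, |ξ|² M}` of `L₀`. -/
def P0proj (d : ℕ) (h : V d → ℝ) (ξ : V d) : ℝ :=
  ((∫ x, h x * (((d:ℝ) + 2)/2 - ‖x‖ ^ 2)) + 2 * ⟪(∫ x, h x • x), ξ⟫
    + (∫ x, h x * ((2/(d:ℝ)) * ‖x‖ ^ 2 - 1)) * ‖ξ‖ ^ 2) * Maxw d ξ

/-- The spectral gap `μ⋆` of the elastic linearized operator `L₀` in `L²(M⁻¹)`,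
characterized through its Dirichlet form. -/
def specGap (d : ℕ) : ℝ :=
  sSup {μ : ℝ | 0 < μ ∧ ∀ h : V d → ℝ,
    Integrable (fun ξ => (1 + ‖ξ‖) * h ξ ^ 2 / Maxw d ξ) →
    μ * ∫ ξ, (h ξ - P0proj d h ξ) ^ 2 / Maxw d ξ ≤ ∫ ξ, -(elasticL h ξ) * h ξ / Maxw d ξ}

/-- Fourier transform of a (weighted) real function on `ℝ^d`. -/
def fourierW {d : ℕ} (g : V d → ℝ) (ξ : V d) : ℂ :=
  ∫ x, Complex.exp (-(2 * Real.pi * ⟪x, ξ⟫ : ℝ) * Complex.I) * (g x : ℂ)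

/-- Membership in the weighted Sobolev space `H^s_η(ℝ^d)`. -/
def MemHsW {d : ℕ} (s η : ℝ) (f : V d → ℝ) : Prop :=
  MemLp f 2 volume ∧
  Integrable (fun ξ : V d => ‖fourierW (fun x => f x * jap x ^ η) ξ‖ ^ 2 * jap ξ ^ (2 * s))

/-!
On the unit sphere, energy conservation `‖v' - v₀‖² + ‖v'₋ - v₀‖² = ‖ξ - v₀‖² + ‖v₋ - v₀‖²` shows
that both outgoing velocities can lie in `B(v₀, δ)` only if `‖ξ - v₀‖ ≤ √2 δ`, so `Q₊` vanishes
outside `B(v₀, √2 δ)`. Conversely, if `‖ξ - v₀‖ ≤ (1 - χ) √2 δ` and `‖v₋ - v₀‖ ≤ ρ = √χ δ / 2`, then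
by Apollonius' identity every `σ` in the band `|⟪m, σ⟫| ≤ (χ / 4) ‖m‖`, `m = (ξ + v₋) / 2 - v₀`,
keeps both outgoing velocities in `B(v₀, δ)`. Comparing with a box inside the unit ball, the band
has sphere measure `≳ χ`. Integrating over the `v₋` with moreover `‖ξ - v₋‖ > ρ / 2`, a set of
volume `≳ ρ ^ d`, gives `Q₊(ξ) ≳ χ ρ ^ (d + 1) ≳ χ ^ (d + 1) δ ^ (d + 1)`.
-/

section SphereMeasure

variable {d : ℕ}

lemma sphMeas_apply {s : Set (V d)} (hs : MeasurableSet s) :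
    sphMeas d s = (volume (ball (0 : V d) 1))⁻¹ *
      volume ((fun x : V d => ‖x‖⁻¹ • x) ⁻¹' s ∩ ball 0 1) := by
  have hm : Measurable fun x : V d => ‖x‖⁻¹ • x := by fun_prop
  rw [sphMeas, Measure.map_apply hm hs, Measure.smul_apply,
    Measure.restrict_apply (hm hs), smul_eq_mul]

lemma sphMeas_real_apply {s : Set (V d)} (hs : MeasurableSet s) :
    (sphMeas d).real s = (volume.real (ball (0 : V d) 1))⁻¹ *
      volume.real ((fun x : V d => ‖x‖⁻¹ • x) ⁻¹' s ∩ ball 0 1) := by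
  rw [measureReal_def, sphMeas_apply hs, ENNReal.toReal_mul, ENNReal.toReal_inv,
    measureReal_def, measureReal_def]

instance : IsProbabilityMeasure (sphMeas d) := ⟨by
  rw [sphMeas_apply MeasurableSet.univ, preimage_univ, univ_inter,
    ENNReal.inv_mul_cancel (measure_ball_pos _ _ one_pos).ne' measure_ball_lt_top.ne]⟩

lemma ae_sphMeas_norm_eq_one [NeZero d] : ∀ᵐ σ ∂sphMeas d, ‖σ‖ = 1 := by
  have hs : MeasurableSet {σ : V d | ‖σ‖ ≠ 1} :=
    measurable_norm (measurableSet_singleton (1 : ℝ)).compl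
  refine ae_iff.2 (le_antisymm ?_ zero_le)
  rw [sphMeas_apply hs]
  calc _ ≤ (volume (ball (0 : V d) 1))⁻¹ * volume ({0} : Set (V d)) := by
        gcongr
        intro x ⟨hx, _⟩
        by_contra h
        exact hx (norm_smul_inv_norm h)
    _ = 0 := by rw [measure_singleton, mul_zero]

lemma exists_orthonormalBasis_inner_eq (a : V d) (i : Fin d) :
    ∃ b : OrthonormalBasis (Fin d) ℝ (V d), ∀ x, ⟪a, x⟫ = ‖a‖ * b.repr x i := by
  rcases eq_or_ne a 0 with rfl | ha
  · exact ⟨EuclideanSpace.basisFun (Fin d) ℝ, fun x => by simp⟩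
  have hunit : Orthonormal ℝ (({i} : Set (Fin d)).domRestrict fun _ => ‖a‖⁻¹ • a) :=
    ⟨fun _ => norm_smul_inv_norm ha,
      fun j k hjk => absurd (Subtype.ext (j.2.trans k.2.symm)) hjk⟩
  obtain ⟨b, hb⟩ := hunit.exists_orthonormalBasis_extension_of_card_eq (by simp)
  refine ⟨b, fun x => ?_⟩
  rw [b.repr_apply_apply, hb i rfl, real_inner_smul_left, ← mul_assoc,
    mul_inv_cancel₀ (norm_ne_zero_iff.2 ha), one_mul]

def bandConst (d : ℕ) : ℝ := 1 / 8 * (1 / (8 * d)) ^ (d - 2)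

lemma bandConst_pos (hd : 0 < d) : 0 < bandConst d := by
  unfold bandConst; positivity

def bandSides (n : ℕ) (τ : ℝ) : Fin (n + 2) → Set ℝ :=
  Fin.cons (Icc (-(τ / 2)) (τ / 2))
    (Fin.cons (Icc (1 / 2) (5 / 8)) fun _ => Icc 0 (1 / (8 * (n + 2))))

lemma measurableSet_pi_bandSides (n : ℕ) (τ : ℝ) : MeasurableSet (univ.pi (bandSides n τ)) :=
  MeasurableSet.univ_pi fun i => by
    refine Fin.cases ?_ (Fin.cases ?_ fun _ => ?_) i <;> simp [bandSides, measurableSet_Icc]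

/-- A box in the unit ball whose image under `y ↦ y / ‖y‖` lies in the band `|σ 0| ≤ τ`; its
volume `bandConst (n + 2) * τ` bounds the sphere measure of that band from below. -/
def bandBox (n : ℕ) (τ : ℝ) : Set (V (n + 2)) := WithLp.ofLp ⁻¹' univ.pi (bandSides n τ)

lemma measurableSet_bandBox (n : ℕ) (τ : ℝ) : MeasurableSet (bandBox n τ) :=
  (measurableSet_pi_bandSides n τ).preimage (PiLp.volume_preserving_ofLp _).measurable

lemma volume_real_bandBox (n : ℕ) {τ : ℝ} (hτ : 0 ≤ τ) :
    volume.real (bandBox n τ) = bandConst (n + 2) * τ := by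
  rw [measureReal_def, bandBox, (PiLp.volume_preserving_ofLp _).measure_preimage
    (measurableSet_pi_bandSides n τ).nullMeasurableSet]
  simp only [bandSides, volume_pi_pi, Fin.prod_univ_succ, Fin.cons_zero, Fin.cons_succ,
    Real.volume_Icc, Finset.prod_const, Finset.card_univ, Fintype.card_fin, ENNReal.toReal_mul,
    ENNReal.toReal_pow, sub_zero, bandConst]
  rw [ENNReal.toReal_ofReal (by linarith), ENNReal.toReal_ofReal (by norm_num),
    ENNReal.toReal_ofReal (by positivity)]
  push_cast
  ring

lemma norm_mem_Ico_of_mem_bandBox {n : ℕ} {τ : ℝ} (hτ : τ ≤ 1 / 4) {y : V (n + 2)}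
    (hy : y ∈ bandBox n τ) : ‖y‖ ∈ Ico (1 / 2) 1 := by
  simp only [bandBox, bandSides, mem_preimage, mem_univ_pi] at hy
  have h0 := hy 0
  have h1 := hy (Fin.succ 0)
  have hk : ∀ k : Fin n, y k.succ.succ ∈ Icc (0 : ℝ) (1 / (8 * (n + 2))) := fun k => hy k.succ.succ
  simp only [Fin.cons_zero, mem_Icc] at h0
  simp only [Fin.cons_succ, Fin.cons_zero, mem_Icc] at h1
  have hl : 1 / 2 ≤ ‖y‖ := h1.1.trans ((le_abs_self _).trans (PiLp.norm_apply_le y _))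
  refine ⟨hl, ?_⟩
  have hsum : ∑ k : Fin n, y k.succ.succ ^ 2 ≤ n * (1 / (8 * (n + 2))) ^ 2 := by
    simpa using Finset.sum_le_card_nsmul Finset.univ _ _ fun k _ =>
      pow_le_pow_left₀ (hk k).1 (hk k).2 2
  have hn : (n : ℝ) * (1 / (8 * (n + 2))) ^ 2 ≤ 1 / 64 := by
    rw [div_pow, one_pow, mul_one_div, div_le_div_iff₀ (by positivity) (by norm_num)]
    nlinarith
  have hsq : ‖y‖ ^ 2 < 1 := by
    rw [EuclideanSpace.real_norm_sq_eq, Fin.sum_univ_succ, Fin.sum_univ_succ]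
    nlinarith
  nlinarith

lemma bandConst_mul_div_le_sphMeas_band (hd : 2 ≤ d) (a : V d) {τ : ℝ} (hτ : 0 ≤ τ)
    (hτ' : τ ≤ 1 / 4) :
    bandConst d * τ / volume.real (ball (0 : V d) 1) ≤
      (sphMeas d).real {σ | |⟪a, σ⟫| ≤ ‖a‖ * τ ∧ ‖σ‖ ≤ 1} := by
  obtain ⟨n, rfl⟩ : ∃ n, d = n + 2 := ⟨d - 2, by omega⟩
  obtain ⟨b, hb⟩ := exists_orthonormalBasis_inner_eq a 0
  have hS : MeasurableSet {σ : V (n + 2) | |⟪a, σ⟫| ≤ ‖a‖ * τ ∧ ‖σ‖ ≤ 1} :=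
    (measurableSet_le (f := fun σ => |⟪a, σ⟫|) (by fun_prop) (by fun_prop)).inter
      (measurableSet_le (f := fun σ : V (n + 2) => ‖σ‖) (by fun_prop) (by fun_prop))
  have hbox : volume.real (b.repr ⁻¹' bandBox n τ) = bandConst (n + 2) * τ := by
    rw [measureReal_def, b.measurePreserving_repr.measure_preimage
      (measurableSet_bandBox n τ).nullMeasurableSet, ← measureReal_def, volume_real_bandBox n hτ]
  rw [sphMeas_real_apply hS, div_eq_inv_mul, ← hbox]
  refine mul_le_mul_of_nonneg_left (measureReal_mono ?_ ?_) (by positivity)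
  · intro x hx
    obtain ⟨hl, hu⟩ := norm_mem_Ico_of_mem_bandBox hτ' hx
    rw [LinearIsometryEquiv.norm_map] at hl hu
    have hx0 : x ≠ 0 := norm_pos_iff.1 (by linarith)
    refine ⟨⟨?_, (norm_smul_inv_norm hx0).le⟩, mem_ball_zero_iff.2 hu⟩
    have h0 : b.repr x 0 ∈ _ := hx 0 trivial
    simp only [bandSides, Fin.cons_zero, mem_Icc] at h0
    calc |⟪a, ‖x‖⁻¹ • x⟫| = ‖x‖⁻¹ * (‖a‖ * |b.repr x 0|) := by
          rw [real_inner_smul_right, hb, abs_mul, abs_mul, abs_of_nonneg (by positivity),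
            abs_norm]
      _ ≤ 2 * (‖a‖ * (τ / 2)) := by
          gcongr
          · rw [inv_le_comm₀ (by linarith) two_pos]; linarith
          · exact abs_le.2 h0
      _ = ‖a‖ * τ := by ring
  · exact (measure_mono inter_subset_right).trans_lt measure_ball_lt_top |>.ne

end SphereMeasure

section Collision

variable {d : ℕ}

def collisionSet (B : Set (V d)) (v w : V d) : Set (V d) := {σ | vP v w σ ∈ B ∧ vPs v w σ ∈ B}

lemma vPs_eq_vP_neg (v w σ : V d) : vPs v w σ = vP v w (-σ) := by
  rw [vP, vPs, smul_neg, sub_eq_add_neg]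

lemma vP_add_vPs (v w σ : V d) : vP v w σ + vPs v w σ = v + w := by
  rw [vP, vPs]; module

lemma measurableSet_collisionSet {B : Set (V d)} (hB : MeasurableSet B) (v w : V d) :
    MeasurableSet (collisionSet B v w) :=
  (hB.preimage (by unfold vP; fun_prop)).inter (hB.preimage (by unfold vPs; fun_prop))

lemma Qplus_indicator_eq {B : Set (V d)} (hB : MeasurableSet B) (v : V d) :
    Qplus (B.indicator fun _ => (1 : ℝ)) (B.indicator fun _ => (1 : ℝ)) v =
      ∫ w, ‖v - w‖ * (sphMeas d).real (collisionSet B v w) := by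
  refine integral_congr_ae (ae_of_all _ fun w => ?_)
  have : (fun σ => ‖v - w‖ * (B.indicator (fun _ => (1 : ℝ)) (vP v w σ) *
      B.indicator (fun _ => (1 : ℝ)) (vPs v w σ))) =
      (collisionSet B v w).indicator fun _ => ‖v - w‖ := by
    ext σ
    by_cases h : vP v w σ ∈ B <;> by_cases h' : vPs v w σ ∈ B <;> simp [collisionSet, h, h']
  dsimp only
  rw [this, integral_indicator_const _ (measurableSet_collisionSet hB v w), smul_eq_mul, mul_comm]

lemma norm_midpoint_sub_sq_add {F : Type*} [NormedAddCommGroup F] [InnerProductSpace ℝ F]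
    (c v w : F) :
    ‖(2 : ℝ)⁻¹ • (v + w) - c‖ ^ 2 + (‖v - w‖ / 2) ^ 2 = (‖v - c‖ ^ 2 + ‖w - c‖ ^ 2) / 2 := by
  have h := parallelogram_law_with_norm ℝ (v - c) (w - c)
  rw [show v - c + (w - c) = (2 : ℝ) • ((2 : ℝ)⁻¹ • (v + w) - c) by module,
    show v - c - (w - c) = v - w by abel, norm_smul, Real.norm_two] at h
  linear_combination h / 4

lemma norm_vP_sub_sq (c v w σ : V d) :
    ‖vP v w σ - c‖ ^ 2 = (‖v - c‖ ^ 2 + ‖w - c‖ ^ 2) / 2 +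
      ‖v - w‖ * ⟪(2 : ℝ)⁻¹ • (v + w) - c, σ⟫ + (‖v - w‖ / 2) ^ 2 * (‖σ‖ ^ 2 - 1) := by
  rw [show vP v w σ - c = ((2 : ℝ)⁻¹ • (v + w) - c) + (‖v - w‖ / 2) • σ by rw [vP]; abel,
    norm_add_sq_real, real_inner_smul_right, norm_smul, Real.norm_eq_abs,
    abs_of_nonneg (by positivity), ← norm_midpoint_sub_sq_add c v w]
  ring

lemma norm_vP_sub_sq_add_norm_vPs_sub_sq {σ : V d} (hσ : ‖σ‖ = 1) (c v w : V d) :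
    ‖vP v w σ - c‖ ^ 2 + ‖vPs v w σ - c‖ ^ 2 = ‖v - c‖ ^ 2 + ‖w - c‖ ^ 2 := by
  rw [vPs_eq_vP_neg, norm_vP_sub_sq, norm_vP_sub_sq, norm_neg, hσ, inner_neg_right]
  ring

lemma norm_vP_sub_sq_le {σ : V d} (hσ : ‖σ‖ ≤ 1) (c v w : V d) :
    ‖vP v w σ - c‖ ^ 2 ≤
      (‖v - c‖ ^ 2 + ‖w - c‖ ^ 2) / 2 + ‖v - w‖ * |⟪(2 : ℝ)⁻¹ • (v + w) - c, σ⟫| := by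
  rw [norm_vP_sub_sq]
  have : ‖σ‖ ^ 2 ≤ 1 := pow_le_one₀ (norm_nonneg σ) hσ
  nlinarith [le_abs_self ⟪(2 : ℝ)⁻¹ • (v + w) - c, σ⟫, norm_nonneg (v - w), sq_nonneg ‖v - w‖]

end Collision

section ClosedBall

variable {d : ℕ}

local notation "𝟙" B => Set.indicator B fun _ => (1 : ℝ)

lemma collisionSet_closedBall_subset {c v : V d} {δ : ℝ} (hv : Real.sqrt 2 * δ < ‖v - c‖)
    (w : V d) : collisionSet (closedBall c δ) v w ⊆ {σ | ‖σ‖ ≠ 1} := by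
  rintro σ ⟨hP, hPs⟩ hσ
  rw [mem_closedBall_iff_norm] at hP hPs
  have hδ : 0 ≤ δ := (norm_nonneg _).trans hP
  have h2 : ‖v - c‖ ^ 2 + ‖w - c‖ ^ 2 ≤ 2 * δ ^ 2 := by
    rw [← norm_vP_sub_sq_add_norm_vPs_sub_sq hσ]
    nlinarith [norm_nonneg (vP v w σ - c), norm_nonneg (vPs v w σ - c)]
  have h3 : 2 * δ ^ 2 < ‖v - c‖ ^ 2 := by
    calc 2 * δ ^ 2 = (Real.sqrt 2 * δ) ^ 2 := by rw [mul_pow, Real.sq_sqrt zero_le_two]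
      _ < ‖v - c‖ ^ 2 := by gcongr
  nlinarith [sq_nonneg ‖w - c‖]

lemma Qplus_indicator_closedBall_eq_zero [NeZero d] {c v : V d} {δ : ℝ}
    (hv : Real.sqrt 2 * δ < ‖v - c‖) : Qplus (𝟙 closedBall c δ) (𝟙 closedBall c δ) v = 0 := by
  rw [Qplus_indicator_eq measurableSet_closedBall]
  refine integral_eq_zero_of_ae (ae_of_all _ fun w => ?_)
  show ‖v - w‖ * _ = 0
  rw [measureReal_def, measure_mono_null (collisionSet_closedBall_subset hv w)
    (ae_iff.1 ae_sphMeas_norm_eq_one), ENNReal.toReal_zero, mul_zero]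

lemma Qplus_indicator_nonneg (B : Set (V d)) (v : V d) : 0 ≤ Qplus (𝟙 B) (𝟙 B) v :=
  integral_nonneg fun _ => integral_nonneg fun _ => mul_nonneg (norm_nonneg _)
    (mul_nonneg (indicator_nonneg (fun _ _ => zero_le_one) _)
      (indicator_nonneg (fun _ _ => zero_le_one) _))

lemma collisionSet_closedBall_eq_empty {c v w : V d} {δ : ℝ}
    (hw : w ∉ closedBall ((2 : ℝ) • c - v) (2 * δ)) : collisionSet (closedBall c δ) v w = ∅ := by
  refine eq_empty_of_forall_notMem fun σ ⟨hP, hPs⟩ => hw ?_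
  rw [mem_closedBall_iff_norm] at hP hPs ⊢
  calc ‖w - ((2 : ℝ) • c - v)‖ = ‖(vP v w σ - c) + (vPs v w σ - c)‖ := by
        congr 1; linear_combination (norm := module) -vP_add_vPs v w σ
    _ ≤ 2 * δ := (norm_add_le _ _).trans (by linarith)

lemma integrable_collisionSet_closedBall (c v : V d) (δ : ℝ) :
    Integrable fun w => ‖v - w‖ * (sphMeas d).real (collisionSet (closedBall c δ) v w) := by
  have hmeas : Measurable fun w => (sphMeas d).real (collisionSet (closedBall c δ) v w) := by
    have hT : MeasurableSet {p : V d × V d | vP v p.1 p.2 ∈ closedBall c δ ∧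
        vPs v p.1 p.2 ∈ closedBall c δ} :=
      (measurableSet_closedBall.preimage (by unfold vP; fun_prop)).inter
        (measurableSet_closedBall.preimage (by unfold vPs; fun_prop))
    exact (measurable_measure_prodMk_left hT).ennreal_toReal
  refine IntegrableOn.integrable_of_forall_notMem_eq_zero
    (s := closedBall ((2 : ℝ) • c - v) (2 * δ)) ?_ fun w hw => by
      rw [collisionSet_closedBall_eq_empty hw, measureReal_empty, mul_zero]
  refine Measure.integrableOn_of_bounded (M := ‖v - ((2 : ℝ) • c - v)‖ + 2 * δ)
    measure_closedBall_lt_top.ne (by fun_prop) ?_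
  refine (ae_restrict_iff' measurableSet_closedBall).2 (ae_of_all _ fun w hw => ?_)
  rw [mem_closedBall_iff_norm] at hw
  rw [norm_mul, Real.norm_of_nonneg measureReal_nonneg, norm_norm]
  calc ‖v - w‖ * (sphMeas d).real _ ≤ ‖v - w‖ :=
        mul_le_of_le_one_right (norm_nonneg _) measureReal_le_one
    _ ≤ ‖v - ((2 : ℝ) • c - v)‖ + ‖w - ((2 : ℝ) • c - v)‖ := by
        rw [norm_sub_rev w]; exact norm_sub_le_norm_sub_add_norm_sub _ _ _
    _ ≤ _ := by gcongr

lemma vP_mem_closedBall_of_mem_band {c v w σ : V d} {δ τ : ℝ} (hδ : 0 ≤ δ) (hτ : 0 ≤ τ)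
    (hE : (‖v - c‖ ^ 2 + ‖w - c‖ ^ 2) * (1 + τ) ≤ 2 * δ ^ 2) (hσ : ‖σ‖ ≤ 1)
    (hband : |⟪(2 : ℝ)⁻¹ • (v + w) - c, σ⟫| ≤ ‖(2 : ℝ)⁻¹ • (v + w) - c‖ * τ) :
    vP v w σ ∈ closedBall c δ := by
  rw [mem_closedBall_iff_norm, ← sq_le_sq₀ (norm_nonneg _) hδ]
  have hmid := norm_midpoint_sub_sq_add c v w
  -- AM-GM with `m = 2⁻¹ • (v + w)`: `‖v - w‖ ‖m - c‖ ≤ ‖m - c‖² + (‖v - w‖ / 2)²`, and the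
  -- right-hand side is `(‖v - c‖² + ‖w - c‖²) / 2` by Apollonius' identity
  have hcross : ‖v - w‖ * |⟪(2 : ℝ)⁻¹ • (v + w) - c, σ⟫| ≤
      (‖v - c‖ ^ 2 + ‖w - c‖ ^ 2) / 2 * τ := by
    calc _ ≤ ‖v - w‖ * (‖(2 : ℝ)⁻¹ • (v + w) - c‖ * τ) := by gcongr
      _ ≤ _ := by
        rw [← hmid, ← mul_assoc]
        gcongr
        nlinarith [sq_nonneg (‖(2 : ℝ)⁻¹ • (v + w) - c‖ - ‖v - w‖ / 2)]
  linarith [norm_vP_sub_sq_le hσ c v w]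

lemma band_subset_collisionSet_closedBall {c v w : V d} {δ τ : ℝ} (hδ : 0 ≤ δ) (hτ : 0 ≤ τ)
    (hE : (‖v - c‖ ^ 2 + ‖w - c‖ ^ 2) * (1 + τ) ≤ 2 * δ ^ 2) :
    {σ | |⟪(2 : ℝ)⁻¹ • (v + w) - c, σ⟫| ≤ ‖(2 : ℝ)⁻¹ • (v + w) - c‖ * τ ∧ ‖σ‖ ≤ 1} ⊆
      collisionSet (closedBall c δ) v w := fun σ ⟨hband, hσ⟩ =>
  ⟨vP_mem_closedBall_of_mem_band hδ hτ hE hσ hband, vPs_eq_vP_neg v w σ ▸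
    vP_mem_closedBall_of_mem_band hδ hτ hE (by rwa [norm_neg])
      (by rwa [inner_neg_right, abs_neg])⟩

lemma bandConst_mul_div_le_sphMeas_collisionSet (hd : 2 ≤ d) {χ : ℝ} (hχ : χ ∈ Ioo 0 1)
    {v₀ v w : V d} {δ : ℝ} (hδ : 0 < δ) (hv : ‖v - v₀‖ ≤ (1 - χ) * (Real.sqrt 2 * δ))
    (hw : ‖w - v₀‖ ≤ Real.sqrt χ * δ / 2) :
    bandConst d * (χ / 4) / volume.real (ball (0 : V d) 1) ≤
      (sphMeas d).real (collisionSet (closedBall v₀ δ) v w) := by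
  obtain ⟨hχ0, hχ1⟩ := hχ
  have hv2 : ‖v - v₀‖ ^ 2 ≤ 2 * (1 - χ) ^ 2 * δ ^ 2 := by
    calc _ ≤ ((1 - χ) * (Real.sqrt 2 * δ)) ^ 2 := by gcongr
      _ = _ := by rw [mul_pow, mul_pow, Real.sq_sqrt zero_le_two]; ring
  have hw2 : ‖w - v₀‖ ^ 2 ≤ χ * δ ^ 2 / 4 := by
    calc _ ≤ (Real.sqrt χ * δ / 2) ^ 2 := by gcongr
      _ = _ := by rw [div_pow, mul_pow, Real.sq_sqrt hχ0.le]; ring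
  have hE : (‖v - v₀‖ ^ 2 + ‖w - v₀‖ ^ 2) * (1 + χ / 4) ≤ 2 * δ ^ 2 := by
    nlinarith [mul_pos hχ0 (sq_pos_of_pos hδ), mul_pos (mul_pos hχ0 hχ0) (sq_pos_of_pos hδ)]
  exact (bandConst_mul_div_le_sphMeas_band hd _ (by positivity) (by linarith)).trans
    (measureReal_mono (band_subset_collisionSet_closedBall hδ.le (by positivity) hE))

lemma pow_succ_le_mul_sqrt_pow {χ : ℝ} (hχ0 : 0 ≤ χ) (hχ1 : χ ≤ 1) {n : ℕ} (hn : 1 ≤ n) :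
    χ ^ (n + 1) ≤ χ * Real.sqrt χ ^ (n + 1) :=
  calc χ ^ (n + 1) = Real.sqrt χ ^ (2 * n + 2) := by
        rw [show 2 * n + 2 = 2 * (n + 1) by ring, pow_mul, Real.sq_sqrt hχ0]
    _ ≤ Real.sqrt χ ^ (n + 3) :=
        pow_le_pow_of_le_one (Real.sqrt_nonneg χ) (Real.sqrt_le_one.2 hχ1) (by omega)
    _ = χ * Real.sqrt χ ^ (n + 1) := by rw [pow_add _ (n + 1) 2, Real.sq_sqrt hχ0, mul_comm]

lemma mul_pow_div_two_le_volume_real_closedBall_sdiff (hd : 1 ≤ d) (x y : V d) {r : ℝ}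
    (hr : 0 ≤ r) :
    volume.real (ball (0 : V d) 1) * r ^ d / 2 ≤
      volume.real (closedBall x r \ closedBall y (r / 2)) := by
  refine le_trans ?_ (le_measureReal_sdiff measure_closedBall_lt_top.ne)
  rw [Measure.addHaar_real_closedBall _ _ hr, Measure.addHaar_real_closedBall _ _ (by positivity),
    finrank_euclideanSpace_fin, div_pow]
  have h : r ^ d / 2 ^ d ≤ r ^ d / 2 :=
    div_le_div_of_nonneg_left (by positivity) two_pos (le_self_pow₀ one_le_two (by omega))
  have hω : 0 ≤ volume.real (ball (0 : V d) 1) := measureReal_nonneg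
  nlinarith [mul_le_mul_of_nonneg_right h hω]

lemma le_Qplus_indicator_closedBall (hd : 2 ≤ d) {χ : ℝ} (hχ : χ ∈ Ioo 0 1) {v₀ ξ : V d}
    {δ : ℝ} (hδ : 0 < δ) (hξ : ξ ∈ closedBall v₀ ((1 - χ) * (Real.sqrt 2 * δ))) :
    bandConst d / (32 * 2 ^ d) * δ ^ (d + 1) * χ ^ (d + 1) ≤
      Qplus (𝟙 closedBall v₀ δ) (𝟙 closedBall v₀ δ) ξ := by
  set ρ := Real.sqrt χ * δ / 2 with hρ
  set ω := volume.real (ball (0 : V d) 1)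
  set A := closedBall v₀ ρ \ closedBall ξ (ρ / 2)
  set F := fun w => ‖ξ - w‖ * (sphMeas d).real (collisionSet (closedBall v₀ δ) ξ w)
  have hω : 0 < ω := ENNReal.toReal_pos (measure_ball_pos _ _ one_pos).ne' measure_ball_lt_top.ne
  have hρ0 : 0 < ρ := div_pos (mul_pos (Real.sqrt_pos.2 hχ.1) hδ) two_pos
  have hχ0 : 0 ≤ χ := hχ.1.le
  have hβ := bandConst_pos (d := d) (by omega)
  have hF : ∀ w ∈ A, ρ / 2 * (bandConst d * (χ / 4) / ω) ≤ F w := by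
    rintro w ⟨hwv, hwξ⟩
    rw [mem_closedBall_iff_norm] at hξ hwv
    rw [mem_closedBall, not_le, dist_eq_norm'] at hwξ
    exact mul_le_mul hwξ.le (bandConst_mul_div_le_sphMeas_collisionSet hd hχ hδ hξ hwv)
      (by positivity) (norm_nonneg _)
  have hFint : Integrable F := integrable_collisionSet_closedBall v₀ ξ δ
  calc bandConst d / (32 * 2 ^ d) * δ ^ (d + 1) * χ ^ (d + 1)
      ≤ bandConst d / (32 * 2 ^ d) * δ ^ (d + 1) * (χ * Real.sqrt χ ^ (d + 1)) := by
        gcongr; exact pow_succ_le_mul_sqrt_pow hχ0 hχ.2.le (by omega)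
    _ = ρ / 2 * (bandConst d * (χ / 4) / ω) * (ω * ρ ^ d / 2) := by
        rw [hρ, div_pow]; field_simp; ring
    _ ≤ ρ / 2 * (bandConst d * (χ / 4) / ω) * volume.real A := by
        gcongr; exact mul_pow_div_two_le_volume_real_closedBall_sdiff (by omega) v₀ ξ hρ0.le
    _ ≤ ∫ w in A, F w := setIntegral_ge_of_const_le_real
        (measurableSet_closedBall.diff measurableSet_closedBall)
        ((measure_mono sdiff_subset).trans_lt measure_closedBall_lt_top).ne hF hFint.integrableOn
    _ ≤ ∫ w, F w := setIntegral_le_integral hFint (ae_of_all _ fun w => by positivity)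
    _ = Qplus (𝟙 closedBall v₀ δ) (𝟙 closedBall v₀ δ) ξ :=
        (Qplus_indicator_eq measurableSet_closedBall ξ).symm

lemma tsupport_Qplus_indicator_closedBall (hd : 2 ≤ d) (v₀ : V d) {δ : ℝ} (hδ : 0 < δ) :
    tsupport (fun ξ => Qplus (𝟙 closedBall v₀ δ) (𝟙 closedBall v₀ δ) ξ) =
      closedBall v₀ (Real.sqrt 2 * δ) := by
  have : NeZero d := ⟨by omega⟩
  have hr : 0 < Real.sqrt 2 * δ := by positivity
  refine (closure_minimal (fun ξ hξ => ?_) isClosed_closedBall).antisymm ?_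
  · by_contra h
    rw [mem_closedBall, not_le, dist_eq_norm] at h
    exact hξ (Qplus_indicator_closedBall_eq_zero h)
  rw [← closure_ball v₀ hr.ne']
  refine closure_mono fun ξ hξ => ?_
  rw [mem_ball, dist_eq_norm, ← div_lt_one hr] at hξ
  set χ := (1 - ‖ξ - v₀‖ / (Real.sqrt 2 * δ)) / 2 with hχ
  have hξ0 : 0 ≤ ‖ξ - v₀‖ / (Real.sqrt 2 * δ) := by positivity
  have hmem : ξ ∈ closedBall v₀ ((1 - χ) * (Real.sqrt 2 * δ)) := by
    rw [mem_closedBall_iff_norm, ← div_le_iff₀ hr]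
    linarith
  have hβ := bandConst_pos (d := d) (by omega)
  exact (lt_of_lt_of_le (by positivity)
    (le_Qplus_indicator_closedBall hd ⟨by linarith, by linarith⟩ hδ hmem)).ne'

end ClosedBall

/-- Proposition `spread`, spreading property of `Q₊`. For any
`v₀ ∈ ℝ^d` and `δ > 0`, the support of `Q₊(𝟏_{B(v₀,δ)}, 𝟏_{B(v₀,δ)})` is the ball
`B(v₀,√2 δ)`, and for any `0 < χ < 1` there is a universal `κ₀ > 0` (depending only on
`d`) such that
`Q₊(𝟏_{B(v₀,δ)}, 𝟏_{B(v₀,δ)}) ≥ κ₀ δ^{d+1} χ^{d+1} 𝟏_{B(v₀,(1-χ)√2 δ)}` for all `δ > 0`. -/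
theorem Qplus_spreading (d : ℕ) (hd : 3 ≤ d) :
    (∀ (v₀ : V d) (δ : ℝ), 0 < δ →
      tsupport (fun ξ => Qplus ((closedBall v₀ δ).indicator fun _ => (1:ℝ))
          ((closedBall v₀ δ).indicator fun _ => (1:ℝ)) ξ)
        = closedBall v₀ (Real.sqrt 2 * δ)) ∧
    ∃ κ₀ > (0:ℝ), ∀ χ ∈ Set.Ioo (0:ℝ) 1, ∀ (v₀ : V d) (δ : ℝ), 0 < δ → ∀ ξ : V d,
      κ₀ * δ ^ (d + 1) * χ ^ (d + 1) *
          (closedBall v₀ ((1 - χ) * (Real.sqrt 2 * δ))).indicator (fun _ => (1:ℝ)) ξ ≤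
        Qplus ((closedBall v₀ δ).indicator fun _ => (1:ℝ))
          ((closedBall v₀ δ).indicator fun _ => (1:ℝ)) ξ := by
  have hβ : 0 < bandConst d := bandConst_pos (by omega)
  refine ⟨fun v₀ δ hδ => tsupport_Qplus_indicator_closedBall (by omega) v₀ hδ,
    bandConst d / (32 * 2 ^ d), by positivity, fun χ hχ v₀ δ hδ ξ => ?_⟩
  by_cases hξ : ξ ∈ closedBall v₀ ((1 - χ) * (Real.sqrt 2 * δ))
  · rw [indicator_of_mem hξ, mul_one]
    exact le_Qplus_indicator_closedBall (by omega) hχ hδ hξ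
  · rw [indicator_of_notMem hξ, mul_zero]
    exact Qplus_indicator_nonneg _ ξ
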